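/- Let d be a natural number and work in the ring F[[t]] of formal power series over the field F = ℚ(y) of rational functions. The element 1 − 2y − t has invertible constant term 1 − 2y in F, so (y+t)^d/(1 − 2y − t)^{d+1} is a well-defined element of F[[t]]. Its coefficient of t^d equals ( Σ_{i=0}^{d} C(d,i)·C(d+i,i)·y^i·(1−2y)^{d−i} ) / (1−2y)^{2d+1}. -/

import Mathlib

/-!
With `u = 1 - 2y`, rescaling `t ↦ t / u` turns `(u - t)^{-(d+1)}` into the binomial series of
`(1 - t)^{-(d+1)}`, so its coefficient of `t^k` is `C(d+k, d) u^{-(d+1+k)}`. Expanding `(y + t)^d`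
binomially, the coefficient of `t^d` of the product is the sum of `C(d,k) y^k C(d+k,d) u^{-(d+1+k)}`,
and `u^{-(d+1+k)} = u^{d-k} / u^{2d+1}` for `k ≤ d`.
-/

open PowerSeries

theorem coeff_C_add_X_pow_mul {R : Type*} [CommSemiring R] (a : R) (n : ℕ) (f : R⟦X⟧) :
    coeff n ((C a + X) ^ n * f) = ∑ k ∈ Finset.range (n + 1), n.choose k * a ^ k * coeff k f := by
  rw [add_pow, Finset.sum_mul, map_sum]
  refine Finset.sum_congr rfl fun k hk => ?_
  have hterm : C a ^ k * X ^ (n - k) * (n.choose k : R⟦X⟧) * f =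
      C (n.choose k * a ^ k) * (X ^ (n - k) * f) := by
    rw [map_mul, map_pow, map_natCast]; ring
  rw [hterm, coeff_C_mul, coeff_X_pow_mul', if_pos (Nat.sub_le n k),
    Nat.sub_sub_self (Finset.mem_range_succ_iff.mp hk)]

section

variable {K : Type*} [Field K]

theorem C_sub_X_eq_C_mul_rescale {u : K} (hu : u ≠ 0) :
    (C u - X : K⟦X⟧) = C u * rescale u⁻¹ (1 - X) := by
  rw [map_sub, map_one, rescale_X, mul_sub, mul_one, ← mul_assoc, ← map_mul,
    mul_inv_cancel₀ hu, map_one, one_mul]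

theorem inv_C_sub_X_pow_succ {u : K} (hu : u ≠ 0) (n : ℕ) :
    ((C u - X : K⟦X⟧) ^ (n + 1))⁻¹ =
      mk fun k => ((n + k).choose n : K) * u⁻¹ ^ (n + 1 + k) := by
  have hmk : (mk fun k => ((n + k).choose n : K) * u⁻¹ ^ (n + 1 + k)) =
      C (u⁻¹ ^ (n + 1)) * rescale u⁻¹ (invOneSubPow K (n + 1)).val := by
    ext k
    rw [coeff_mk, coeff_C_mul, coeff_rescale, invOneSubPow_val_succ_eq_mk_add_choose, coeff_mk,
      pow_add]
    ring
  rw [inv_eq_iff_mul_eq_one (by simp [hu]), hmk, C_sub_X_eq_C_mul_rescale hu]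
  calc C (u⁻¹ ^ (n + 1)) * rescale u⁻¹ (invOneSubPow K (n + 1)).val *
        (C u * rescale u⁻¹ (1 - X)) ^ (n + 1)
      = C (u⁻¹ ^ (n + 1) * u ^ (n + 1)) *
          rescale u⁻¹ ((invOneSubPow K (n + 1)).val * (1 - X) ^ (n + 1)) := by
        simp only [mul_pow, map_mul, map_pow]; ring
    _ = 1 := by
        rw [← mul_pow, inv_mul_cancel₀ hu, ← invOneSubPow_inv_eq_one_sub_pow, Units.val_inv,
          one_pow, map_one, map_one, one_mul]

theorem one_sub_two_mul_X_ne_zero [CharZero K] : (1 - 2 * RatFunc.X : RatFunc K) ≠ 0 := by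
  have hpoly : (1 - 2 * RatFunc.X : RatFunc K) =
      algebraMap (Polynomial K) _ (1 - 2 * Polynomial.X) := by
    simp only [map_sub, map_mul, RatFunc.algebraMap_X, map_one, map_ofNat]
  rw [hpoly]
  refine RatFunc.algebraMap_ne_zero fun h => ?_
  simpa [Polynomial.coeff_one] using congrArg (Polynomial.coeff · 1) h

theorem inv_pow_add_eq_pow_sub_div {u : K} (hu : u ≠ 0) {k d : ℕ} (hk : k ≤ d) :
    u⁻¹ ^ (d + 1 + k) = u ^ (d - k) / u ^ (2 * d + 1) := by
  rw [eq_div_iff (pow_ne_zero _ hu), inv_pow, ← div_eq_inv_mul, div_eq_iff (pow_ne_zero _ hu),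
    ← pow_add]
  congr 1
  omega

end

theorem coeff_residue_expansion (d : ℕ) :
    IsUnit (PowerSeries.constantCoeff (R := RatFunc ℚ)
      (PowerSeries.C (R := RatFunc ℚ) (1 - 2 * RatFunc.X) - PowerSeries.X)) ∧
    PowerSeries.coeff (R := RatFunc ℚ) d
      ((PowerSeries.C (R := RatFunc ℚ) RatFunc.X + PowerSeries.X) ^ d *
        ((PowerSeries.C (R := RatFunc ℚ) (1 - 2 * RatFunc.X) - PowerSeries.X) ^ (d + 1))⁻¹) =
      (∑ i ∈ Finset.range (d + 1),
        (Nat.choose d i : RatFunc ℚ) * (Nat.choose (d + i) i : RatFunc ℚ) *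
          RatFunc.X ^ i * (1 - 2 * RatFunc.X) ^ (d - i)) /
        (1 - 2 * RatFunc.X) ^ (2 * d + 1) := by
  have hu : (1 - 2 * RatFunc.X : RatFunc ℚ) ≠ 0 := one_sub_two_mul_X_ne_zero
  refine ⟨by simpa using hu, ?_⟩
  rw [coeff_C_add_X_pow_mul, Finset.sum_div]
  refine Finset.sum_congr rfl fun k hk => ?_
  rw [inv_C_sub_X_pow_succ hu, coeff_mk,
    inv_pow_add_eq_pow_sub_div hu (Finset.mem_range_succ_iff.mp hk), Nat.choose_symm_add]
  ring
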